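/- Let C be a closed convex cone in a finite-dimensional real vector space V, and assume the dual cone C* ⊆ V* has nonempty interior. Let K, D ∈ V* be such that ⟨D, α⟩ > 0 for every nonzero α ∈ C with ⟨K, α⟩ ≥ 0. Then there exist δ > 0 and A in the interior of C* such that D = δ·K + A. -/

import Mathlib

/-!
If no `D - δ • K` with `δ > 0` lay in the open convex cone `interior C*`, Hahn–Banach would
separate this open ray from it. Letting the scaling parameters tend to `0` and `∞` shows that the
separating functional is represented by a nonzero vector `β` with `⟪y, β⟫ ≥ 0` on `interior C*`,
hence on `C* = closure (interior C*)`, and with `⟪K, β⟫ ≥ 0 ≥ ⟪D, β⟫`. By the bipolar theorem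
`β ∈ C`, contradicting the positivity of `D` on `C ∩ {K ≥ 0} \ {0}`.
-/

/-- The dual cone of a set `C` in a real inner product space. -/
def innerDual {V : Type*} [NormedAddCommGroup V] [InnerProductSpace ℝ V] (C : Set V) :
    Set V :=
  {y | ∀ x ∈ C, (0 : ℝ) ≤ inner ℝ y x}

open Set Filter Topology Pointwise

lemma nonpos_and_le_of_forall_pos_mul_add_le {a b c : ℝ} (h : ∀ t : ℝ, 0 < t → t * a + b ≤ c) :
    a ≤ 0 ∧ b ≤ c := by
  constructor
  · by_contra! ha
    have := h ((|c - b| + 1) / a) (by positivity)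
    rw [div_mul_cancel₀ _ ha.ne'] at this
    linarith [le_abs_self (c - b)]
  · have hlim : Tendsto (fun t : ℝ => t * a + b) (𝓝[>] 0) (𝓝 b) := by
      have hcont : Continuous fun t : ℝ => t * a + b := by fun_prop
      simpa using hcont.continuousWithinAt (s := Ioi 0) (x := 0) |>.tendsto
    exact le_of_tendsto hlim (eventually_nhdsWithin_of_forall h)

section Separation

variable {E : Type*} [TopologicalSpace E] [AddCommGroup E] [Module ℝ E]
  [IsTopologicalAddGroup E] [ContinuousSMul ℝ E]

theorem exists_ne_zero_nonpos_of_isOpen_cone_disjoint_ray {s : Set E} (hs_open : IsOpen s)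
    (hs_conv : Convex ℝ s) (hs_smul : ∀ t : ℝ, 0 < t → ∀ y ∈ s, t • y ∈ s) (hs_ne : s.Nonempty)
    {D K : E} (hray : ∀ δ : ℝ, 0 < δ → D - δ • K ∉ s) :
    ∃ f : StrongDual ℝ E, f ≠ 0 ∧ (∀ y ∈ s, f y ≤ 0) ∧ f K ≤ 0 ∧ 0 ≤ f D := by
  have hray_conv : Convex ℝ ((fun δ : ℝ => D - δ • K) '' Ioi 0) := by
    have hline : (fun δ : ℝ => D - δ • K) = AffineMap.lineMap D (D - K) := by
      funext δ
      rw [AffineMap.lineMap_apply_module', sub_sub_cancel_left, smul_neg, neg_add_eq_sub]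
    exact hline ▸ (convex_Ioi 0).affine_image _
  have hdisj : Disjoint s ((fun δ : ℝ => D - δ • K) '' Ioi 0) := by
    rw [disjoint_right]
    rintro _ ⟨δ, hδ, rfl⟩
    exact hray δ hδ
  obtain ⟨f, u, hfs, hfray⟩ := geometric_hahn_banach_open hs_conv hs_open hray_conv hdisj
  have hs_bound (y : E) (hy : y ∈ s) : f y ≤ 0 ∧ 0 ≤ u :=
    nonpos_and_le_of_forall_pos_mul_add_le fun t ht => by
      simpa using (hfs _ (hs_smul t ht y hy)).le
  have hray_bound : f K ≤ 0 ∧ u ≤ f D :=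
    nonpos_and_le_of_forall_pos_mul_add_le fun δ hδ => by
      have := hfray _ ⟨δ, hδ, rfl⟩
      simp only [map_sub, map_smul, smul_eq_mul] at this
      linarith
  obtain ⟨y₀, hy₀⟩ := hs_ne
  refine ⟨f, ?_, fun y hy => (hs_bound y hy).1, hray_bound.1,
    (hs_bound y₀ hy₀).2.trans hray_bound.2⟩
  rintro rfl
  have hu_pos : 0 < u := by simpa using hfs y₀ hy₀
  have hu_nonpos : u ≤ 0 := by simpa using hray_bound.2
  linarith

theorem Convex.subset_of_interior_subset {s t : Set E} (hs : Convex ℝ s)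
    (hs_int : (interior s).Nonempty) (ht : IsClosed t) (h : interior s ⊆ t) : s ⊆ t := by
  calc s ⊆ closure s := subset_closure
    _ = closure (interior s) := (hs.closure_interior_eq_closure_of_nonempty_interior hs_int).symm
    _ ⊆ t := closure_minimal h ht

end Separation

section InnerDual

variable {V : Type*} [NormedAddCommGroup V] [InnerProductSpace ℝ V]

theorem innerDual_eq_coe_properCone_innerDual [CompleteSpace V] (C : Set V) :
    innerDual C = (ProperCone.innerDual C : Set V) := by
  ext y
  simp [innerDual, real_inner_comm]

theorem convex_innerDual (C : Set V) : Convex ℝ (innerDual C) := by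
  intro y hy z hz a b ha hb _ x hx
  rw [inner_add_left, real_inner_smul_left, real_inner_smul_left]
  exact add_nonneg (mul_nonneg ha (hy x hx)) (mul_nonneg hb (hz x hx))

theorem smul_mem_interior_innerDual {C : Set V} {t : ℝ} (ht : 0 < t) {y : V}
    (hy : y ∈ interior (innerDual C)) : t • y ∈ interior (innerDual C) := by
  have hsub : t • innerDual C ⊆ innerDual C := by
    rintro _ ⟨z, hz, rfl⟩ x hx
    rw [real_inner_smul_left]
    exact mul_nonneg ht.le (hz x hx)
  have hty : t • y ∈ t • interior (innerDual C) := smul_mem_smul_set hy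
  rw [← interior_smul₀ ht.ne'] at hty
  exact interior_mono hsub hty

theorem Convex.add_mem_of_smul_mem {C : Set V} (hCconv : Convex ℝ C)
    (hCcone : ∀ x ∈ C, ∀ t : ℝ, 0 ≤ t → t • x ∈ C) {x y : V} (hx : x ∈ C) (hy : y ∈ C) :
    x + y ∈ C := by
  have hmid := hCconv hx hy (by norm_num : (0 : ℝ) ≤ 1 / 2) (by norm_num : (0 : ℝ) ≤ 1 / 2)
    (by norm_num)
  convert hCcone _ hmid 2 zero_le_two using 1
  rw [smul_add, smul_smul, smul_smul]
  norm_num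

theorem innerDual_innerDual_subset_insert_zero [CompleteSpace V] {C : Set V}
    (hCclosed : IsClosed C) (hCconv : Convex ℝ C)
    (hCcone : ∀ x ∈ C, ∀ t : ℝ, 0 ≤ t → t • x ∈ C) :
    innerDual (innerDual C) ⊆ insert 0 C := by
  rcases C.eq_empty_or_nonempty with rfl | ⟨x₀, hx₀⟩
  · intro x hx
    simpa [innerDual] using hx (-x)
  let Cp : ProperCone ℝ V :=
    { carrier := C
      add_mem' := hCconv.add_mem_of_smul_mem hCcone
      zero_mem' := by simpa using hCcone x₀ hx₀ 0 le_rfl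
      smul_mem' := fun c x hx => hCcone x hx c c.2
      isClosed' := hCclosed }
  intro x hx
  have hx' : x ∈ ProperCone.innerDual (ProperCone.innerDual (Cp : Set V) : Set V) := by
    refine ProperCone.mem_innerDual.mpr fun z hz => ?_
    rw [real_inner_comm]
    exact hx z ((innerDual_eq_coe_properCone_innerDual C).symm ▸ hz)
  rw [ProperCone.innerDual_innerDual] at hx'
  exact mem_insert_of_mem 0 hx'

end InnerDual

/-- Abstract form of Lemma 4.3: if `D` is strictly positive on the nonzero part of
`C ∩ {K ≥ 0}`, and the dual cone of `C` has nonempty interior, then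
`D = δ • K + A` with `δ > 0` and `A` in the interior of the dual cone. -/
theorem eq_smul_add_interior_dual_of_pos_on_nonneg_part
    {V : Type*} [NormedAddCommGroup V] [InnerProductSpace ℝ V] [FiniteDimensional ℝ V]
    (C : Set V) (hCclosed : IsClosed C) (hCconv : Convex ℝ C)
    (hCcone : ∀ x ∈ C, ∀ t : ℝ, 0 ≤ t → t • x ∈ C)
    (hint : (interior (innerDual C)).Nonempty)
    (K D : V)
    (hD : ∀ α ∈ C, α ≠ 0 → (0 : ℝ) ≤ inner ℝ K α → (0 : ℝ) < inner ℝ D α) :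
    ∃ δ : ℝ, 0 < δ ∧ ∃ A ∈ interior (innerDual C), D = δ • K + A := by
  by_contra! hcon
  obtain ⟨f, hf0, hf_int, hfK, hfD⟩ :=
    exists_ne_zero_nonpos_of_isOpen_cone_disjoint_ray isOpen_interior
      (convex_innerDual C).interior (fun t ht _ hy => smul_mem_interior_innerDual ht hy) hint
      (D := D) (K := K) fun δ hδ hmem => hcon δ hδ _ hmem (by abel)
  have hf_dual : innerDual C ⊆ {y | f y ≤ 0} :=
    (convex_innerDual C).subset_of_interior_subset hint
      (isClosed_le f.continuous continuous_const) hf_int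
  set β := -(InnerProductSpace.toDual ℝ V).symm f
  have hβ (x : V) : inner ℝ x β = -f x := by
    rw [real_inner_comm, inner_neg_left, InnerProductSpace.toDual_symm_apply]
  have hβ0 : β ≠ 0 := by simpa [β] using hf0
  have hβC : β ∈ C := by
    refine (innerDual_innerDual_subset_insert_zero hCclosed hCconv hCcone fun y hy => ?_)
      |>.resolve_left hβ0
    rw [real_inner_comm, hβ]
    exact neg_nonneg.mpr (hf_dual hy)
  have hD_pos := hD β hβC hβ0 (by rw [hβ]; linarith)
  rw [hβ] at hD_pos
  linarith
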